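/- arXiv:2511.21646 — 5 statements merged into one kernel-verified Lean document; each statement's English description precedes it below -/
import Mathlib

section
/- Suppose there is a constant C ≥ 0 such that |f₂(x,μ,q)| ≤ C(1+|q|_Λ) for all x ∈ H, μ ∈ 𝒫₂(H), q ∈ Λ̃, and there are constants C₁ ≥ 0 and C₂, C₃ > 0 such that −C₁ + C₂|q|²_Λ ≤ l₂(x,μ,q) ≤ C₁ + C₃|q|²_Λ for all x ∈ H, μ ∈ 𝒫₂(H), q ∈ Λ̃. Then for every C̃ > 0 there exists a constant K > 0 such that 𝓗ₙ(x,μ,p) = 𝓗ₙ^{K√n}(x,μ,p) for every n ≥ 1, every μ ∈ 𝒫₂(H), and all x = (x₁,…,xₙ), p = (p₁,…,pₙ) ∈ Hⁿ with (Σᵢ|pᵢ|²)^{1/2} ≤ C̃/√n. -/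
open MeasureTheory
open scoped RealInnerProductSpace ENNReal

/-! Fix `q₀ ∈ Λ̃`. By Cauchy–Schwarz and AM-GM, the growth bounds make the cost coercive relative to
the constant control `q₀`: `Σᵢ costᵢ(qᵢ) ≥ Σᵢ costᵢ(q₀) + (C₂/2)|q|² - nB`, where `B` depends only on
the constants, `|q₀|` and `C̃`, because `Σᵢ |n pᵢ|² ≤ n C̃²`. This bounds the infimum from below, and
once `(C₂/2) K² ≥ B` every control with `|q| > K√n` costs at least as much as the constant control,
which is itself admissible for `K ≥ |q₀|`. -/

section

variable {H : Type*} [NormedAddCommGroup H] [InnerProductSpace ℝ H] [CompleteSpace H]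
  [SecondCountableTopology H] [MeasurableSpace H] [BorelSpace H]
variable {Λ : Type*} [NormedAddCommGroup Λ] [InnerProductSpace ℝ Λ] [CompleteSpace Λ]
  [SecondCountableTopology Λ]

/-- `μ` is a Borel probability measure on `H` with finite second moment. -/
def IsP2 (μ : Measure H) : Prop :=
  IsProbabilityMeasure μ ∧ (∫⁻ x, (‖x‖₊ : ℝ≥0∞) ^ 2 ∂μ) < ⊤

/-- The `n`-particle Hamiltonian
`𝓗ₙ(x,μ,p) = (1/n) inf_{q ∈ Λ̃ⁿ} Σᵢ (⟨f(xᵢ,μ,qᵢ), n pᵢ⟩ + l(xᵢ,μ,qᵢ))`. -/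
noncomputable def HamN (f : H → Measure H → Λ → H) (l : H → Measure H → Λ → ℝ)
    (Λt : Set Λ) (n : ℕ) (x : Fin n → H) (μ : Measure H) (p : Fin n → H) : ℝ :=
  (1 / (n : ℝ)) * sInf { v : ℝ | ∃ q : Fin n → Λ, (∀ i, q i ∈ Λt) ∧
    v = ∑ i, (⟪f (x i) μ (q i), (n : ℝ) • p i⟫ + l (x i) μ (q i)) }

/-- The truncated `n`-particle Hamiltonian `𝓗ₙᵐ`, where the infimum is restricted to
controls `q ∈ Λ̃ⁿ` with `(Σᵢ |qᵢ|²)^{1/2} ≤ m`. -/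
noncomputable def HamNm (f : H → Measure H → Λ → H) (l : H → Measure H → Λ → ℝ)
    (Λt : Set Λ) (n : ℕ) (m : ℝ) (x : Fin n → H) (μ : Measure H) (p : Fin n → H) : ℝ :=
  (1 / (n : ℝ)) * sInf { v : ℝ | ∃ q : Fin n → Λ, (∀ i, q i ∈ Λt) ∧
    Real.sqrt (∑ i, ‖q i‖ ^ 2) ≤ m ∧
    v = ∑ i, (⟪f (x i) μ (q i), (n : ℝ) • p i⟫ + l (x i) μ (q i)) }

theorem sInf_setOf_exists_eq_restrict {α : Type*} {P T : α → Prop} {F : α → ℝ} (c : ℝ)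
    (hc : ∀ q, P q → c ≤ F q) {q₀ : α} (hPq₀ : P q₀) (hTq₀ : T q₀)
    (hle : ∀ q, P q → ¬ T q → F q₀ ≤ F q) :
    sInf {v | ∃ q, P q ∧ v = F q} = sInf {v | ∃ q, P q ∧ T q ∧ v = F q} := by
  have hsub : {v | ∃ q, P q ∧ T q ∧ v = F q} ⊆ {v | ∃ q, P q ∧ v = F q} := by
    rintro v ⟨q, hP, -, rfl⟩
    exact ⟨q, hP, rfl⟩
  have hbdd : BddBelow {v | ∃ q, P q ∧ v = F q} := by
    refine ⟨c, ?_⟩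
    rintro v ⟨q, hP, rfl⟩
    exact hc q hP
  refine le_antisymm (csInf_le_csInf hbdd ⟨F q₀, q₀, hPq₀, hTq₀, rfl⟩ hsub) (le_csInf ?_ ?_)
  · exact ⟨F q₀, q₀, hPq₀, rfl⟩
  · rintro v ⟨q, hP, rfl⟩
    by_cases hT : T q
    · exact csInf_le (hbdd.mono hsub) ⟨q, hP, hT, rfl⟩
    · exact (csInf_le (hbdd.mono hsub) ⟨q₀, hPq₀, hTq₀, rfl⟩).trans (hle q hP hT)

theorem inner_add_add_le_of_growth {E : Type*} [NormedAddCommGroup E] [InnerProductSpace ℝ E]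
    {w u u₀ y : E} {c s s₀ t t₀ C C₁ C₂ C₃ : ℝ} (hC₂ : 0 < C₂)
    (hu : ‖u‖ ≤ C * (1 + t)) (hu₀ : ‖u₀‖ ≤ C * (1 + t₀))
    (hs : -C₁ + C₂ * t ^ 2 ≤ s) (hs₀ : s₀ ≤ C₁ + C₃ * t₀ ^ 2) :
    (⟪w + u₀, y⟫ + (c + s₀)) + (C₂ / 2 * t ^ 2 - (C ^ 2 / (2 * C₂) + 1 / 2) * ‖y‖ ^ 2
        - (C ^ 2 * (2 + t₀) ^ 2 / 2 + 2 * C₁ + C₃ * t₀ ^ 2))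
      ≤ ⟪w + u, y⟫ + (c + s) := by
  have hy := norm_nonneg y
  have hinner : -(C * (1 + t) * ‖y‖) ≤ ⟪u, y⟫ :=
    (neg_le_neg (mul_le_mul_of_nonneg_right hu hy)).trans
      (neg_le_of_abs_le (abs_real_inner_le_norm u y))
  have hinner₀ : ⟪u₀, y⟫ ≤ C * (1 + t₀) * ‖y‖ :=
    (real_inner_le_norm u₀ y).trans (mul_le_mul_of_nonneg_right hu₀ hy)
  -- AM-GM twice: `C‖y‖t` is absorbed into `C₂ t²`, and `C‖y‖(2 + t₀)` into `‖y‖²`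
  have hamgm : C * ‖y‖ * t ≤ C₂ / 2 * t ^ 2 + C ^ 2 / (2 * C₂) * ‖y‖ ^ 2 := by
    have h := sq_nonneg (C₂ * t - C * ‖y‖)
    have : C ^ 2 / (2 * C₂) * ‖y‖ ^ 2 * (2 * C₂) = C ^ 2 * ‖y‖ ^ 2 := by field_simp
    nlinarith
  have hamgm₀ : C * ‖y‖ * (2 + t₀) ≤ ‖y‖ ^ 2 / 2 + C ^ 2 * (2 + t₀) ^ 2 / 2 := by
    nlinarith [sq_nonneg (‖y‖ - C * (2 + t₀))]
  rw [inner_add_left, inner_add_left]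
  nlinarith

theorem sum_inner_add_add_le_of_growth {ι E Q : Type*} [Fintype ι] [NormedAddCommGroup E]
    [InnerProductSpace ℝ E] [Norm Q] {S : Set Q} {w : ι → E} {c : ι → ℝ} {u : ι → Q → E}
    {s : ι → Q → ℝ} {C C₁ C₂ C₃ : ℝ} (hC₂ : 0 < C₂)
    (hu : ∀ i, ∀ q ∈ S, ‖u i q‖ ≤ C * (1 + ‖q‖))
    (hs : ∀ i, ∀ q ∈ S, -C₁ + C₂ * ‖q‖ ^ 2 ≤ s i q ∧ s i q ≤ C₁ + C₃ * ‖q‖ ^ 2)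
    (y : ι → E) {q₀ : Q} (hq₀ : q₀ ∈ S) {q : ι → Q} (hq : ∀ i, q i ∈ S) :
    ∑ i, (⟪w i + u i q₀, y i⟫ + (c i + s i q₀))
        + (C₂ / 2 * ∑ i, ‖q i‖ ^ 2 - (C ^ 2 / (2 * C₂) + 1 / 2) * ∑ i, ‖y i‖ ^ 2
          - Fintype.card ι * (C ^ 2 * (2 + ‖q₀‖) ^ 2 / 2 + 2 * C₁ + C₃ * ‖q₀‖ ^ 2))
      ≤ ∑ i, (⟪w i + u i (q i), y i⟫ + (c i + s i (q i))) := by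
  have h := Finset.sum_le_sum fun i (_ : i ∈ Finset.univ) =>
    inner_add_add_le_of_growth (w := w i) (y := y i) (c := c i) hC₂ (hu i (q i) (hq i))
      (hu i q₀ hq₀) (hs i (q i) (hq i)).1 (hs i q₀ hq₀).2
  simp only [Finset.sum_add_distrib, Finset.sum_sub_distrib, ← Finset.mul_sum,
    Finset.sum_const, Finset.card_univ, nsmul_eq_mul] at h ⊢
  linarith

theorem sum_norm_natCast_smul_sq_le {E : Type*} [NormedAddCommGroup E] [NormedSpace ℝ E]
    {n : ℕ} {p : Fin n → E} {D : ℝ}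
    (hp : Real.sqrt (∑ i, ‖p i‖ ^ 2) ≤ D / Real.sqrt n) :
    ∑ i, ‖(n : ℝ) • p i‖ ^ 2 ≤ n * D ^ 2 := by
  have hp' : ∑ i, ‖p i‖ ^ 2 ≤ D ^ 2 / n := by
    rw [Real.sqrt_le_iff, div_pow, Real.sq_sqrt n.cast_nonneg] at hp
    exact hp.2
  simp only [norm_smul, Real.norm_natCast, mul_pow, ← Finset.mul_sum]
  calc (n : ℝ) ^ 2 * ∑ i, ‖p i‖ ^ 2 ≤ n ^ 2 * (D ^ 2 / n) := by gcongr
    _ = n * D ^ 2 := by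
      rcases n.eq_zero_or_pos with rfl | hn
      · simp
      · field_simp

theorem statement0_general
    (f₁ : H → Measure H → H) (f₂ : H → Measure H → Λ → H)
    (l₁ : H → Measure H → ℝ) (l₂ : H → Measure H → Λ → ℝ)
    (Λt : Set Λ) (hΛne : Λt.Nonempty)
    (C : ℝ)
    (hf₂ : ∀ (x : H) (μ : Measure H) (q : Λ), IsP2 μ → q ∈ Λt →
      ‖f₂ x μ q‖ ≤ C * (1 + ‖q‖))
    (C₁ C₂ C₃ : ℝ) (hC₂ : 0 < C₂)
    (hl₂ : ∀ (x : H) (μ : Measure H) (q : Λ), IsP2 μ → q ∈ Λt →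
      -C₁ + C₂ * ‖q‖ ^ 2 ≤ l₂ x μ q ∧ l₂ x μ q ≤ C₁ + C₃ * ‖q‖ ^ 2) :
    ∀ Ct : ℝ, 0 < Ct → ∃ K : ℝ, 0 < K ∧
      ∀ n : ℕ, 1 ≤ n → ∀ μ : Measure H, IsP2 μ →
        ∀ x p : Fin n → H, Real.sqrt (∑ i, ‖p i‖ ^ 2) ≤ Ct / Real.sqrt n →
          HamN (fun a ν q => f₁ a ν + f₂ a ν q) (fun a ν q => l₁ a ν + l₂ a ν q)
              Λt n x μ p
            = HamNm (fun a ν q => f₁ a ν + f₂ a ν q) (fun a ν q => l₁ a ν + l₂ a ν q)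
                Λt n (K * Real.sqrt n) x μ p := by
  obtain ⟨q₀, hq₀⟩ := hΛne
  intro Ct _
  set B := (C ^ 2 / (2 * C₂) + 1 / 2) * Ct ^ 2
    + (C ^ 2 * (2 + ‖q₀‖) ^ 2 / 2 + 2 * C₁ + C₃ * ‖q₀‖ ^ 2)
  set K := max 1 (max ‖q₀‖ (2 * B / C₂))
  have hK1 : 1 ≤ K := le_max_left _ _
  have hKq₀ : ‖q₀‖ ≤ K := (le_max_left _ _).trans (le_max_right _ _)
  have hKB : B ≤ C₂ / 2 * K ^ 2 := by
    have : 2 * B / C₂ ≤ K := (le_max_right _ _).trans (le_max_right _ _)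
    rw [div_le_iff₀ hC₂] at this
    nlinarith [mul_le_mul_of_nonneg_left hK1 (by positivity : 0 ≤ C₂ * K)]
  refine ⟨K, by positivity, fun n _ μ hμ x p hp => ?_⟩
  set F : (Fin n → Λ) → ℝ := fun q =>
    ∑ i, (⟪f₁ (x i) μ + f₂ (x i) μ (q i), (n : ℝ) • p i⟫ + (l₁ (x i) μ + l₂ (x i) μ (q i)))
  have hcoercive : ∀ q : Fin n → Λ, (∀ i, q i ∈ Λt) →
      F (fun _ => q₀) + (C₂ / 2 * ∑ i, ‖q i‖ ^ 2 - n * B) ≤ F q := by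
    intro q hq
    have h := sum_inner_add_add_le_of_growth (w := fun i => f₁ (x i) μ)
      (c := fun i => l₁ (x i) μ) hC₂
      (fun i q hq => hf₂ (x i) μ q hμ hq) (fun i q hq => hl₂ (x i) μ q hμ hq)
      (fun i => (n : ℝ) • p i) hq₀ hq
    have hy := mul_le_mul_of_nonneg_left (sum_norm_natCast_smul_sq_le hp)
      (by positivity : 0 ≤ C ^ 2 / (2 * C₂) + 1 / 2)
    simp only [Fintype.card_fin] at h
    simp only [F, B]
    linarith
  unfold HamN HamNm
  congr 1
  refine sInf_setOf_exists_eq_restrict (F := F) (F (fun _ => q₀) - n * B)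
    (fun q hq => ?_) (q₀ := fun _ => q₀) (fun _ => hq₀) ?_ (fun q hq hT => ?_)
  · nlinarith [hcoercive q hq, Finset.sum_nonneg fun i (_ : i ∈ Finset.univ) => sq_nonneg ‖q i‖]
  · simp only [Finset.sum_const, Finset.card_univ, Fintype.card_fin, nsmul_eq_mul]
    rw [Real.sqrt_mul n.cast_nonneg, Real.sqrt_sq (norm_nonneg _), mul_comm]
    gcongr
  · rw [not_le, Real.lt_sqrt (by positivity), mul_pow, Real.sq_sqrt n.cast_nonneg] at hT
    nlinarith [hcoercive q hq]

/-- Under the growth assumptions on `f₂` and `l₂`, for every `C̃ > 0`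
there is `K > 0` such that `𝓗ₙ(x,μ,p) = 𝓗ₙ^{K√n}(x,μ,p)` whenever
`(Σᵢ|pᵢ|²)^{1/2} ≤ C̃/√n`. -/
theorem statement0
    (f₁ : H → Measure H → H) (f₂ : H → Measure H → Λ → H)
    (l₁ : H → Measure H → ℝ) (l₂ : H → Measure H → Λ → ℝ)
    (Λt : Set Λ) (hΛne : Λt.Nonempty) (hΛconv : Convex ℝ Λt)
    (C : ℝ) (hC : 0 ≤ C)
    (hf₂ : ∀ (x : H) (μ : Measure H) (q : Λ), IsP2 μ → q ∈ Λt →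
      ‖f₂ x μ q‖ ≤ C * (1 + ‖q‖))
    (C₁ C₂ C₃ : ℝ) (hC₁ : 0 ≤ C₁) (hC₂ : 0 < C₂) (hC₃ : 0 < C₃)
    (hl₂ : ∀ (x : H) (μ : Measure H) (q : Λ), IsP2 μ → q ∈ Λt →
      -C₁ + C₂ * ‖q‖ ^ 2 ≤ l₂ x μ q ∧ l₂ x μ q ≤ C₁ + C₃ * ‖q‖ ^ 2) :
    ∀ Ct : ℝ, 0 < Ct → ∃ K : ℝ, 0 < K ∧
      ∀ n : ℕ, 1 ≤ n → ∀ μ : Measure H, IsP2 μ →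
        ∀ x p : Fin n → H, Real.sqrt (∑ i, ‖p i‖ ^ 2) ≤ Ct / Real.sqrt n →
          HamN (fun a ν q => f₁ a ν + f₂ a ν q) (fun a ν q => l₁ a ν + l₂ a ν q)
              Λt n x μ p
            = HamNm (fun a ν q => f₁ a ν + f₂ a ν q) (fun a ν q => l₁ a ν + l₂ a ν q)
                Λt n (K * Real.sqrt n) x μ p :=
  statement0_general f₁ f₂ l₁ l₂ Λt hΛne C hf₂ C₁ C₂ C₃ hC₂ hl₂

end
end

section
/- Suppose there is a constant C ≥ 0 such that |f₂(x,μ,q)| ≤ C(1+|q|_Λ) for all x ∈ H, μ ∈ 𝒫₂(H), q ∈ Λ̃, and there are constants C₁ ≥ 0 and C₂, C₃ > 0 such that −C₁ + C₂|q|²_Λ ≤ l₂(x,μ,q) ≤ C₁ + C₃|q|²_Λ for all x ∈ H, μ ∈ 𝒫₂(H), q ∈ Λ̃. Then for every C > 0 there exists a constant K > 0 such that 𝓗(x,μ,p) = 𝓗^K(x,μ,p) for all μ ∈ 𝒫₂(H) and all x, p ∈ H with |p| ≤ C. -/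
/-!
The control enters `⟨f, p⟩ + l` at most linearly through `f₂` (for bounded `p`) but
quadratically through `l₂`, so the integrand is coercive in `q`, uniformly in `(x, μ)` and
`|p| ≤ C`. Comparing with a fixed `q₀ ∈ Λ̃`, every `q ∈ Λ̃` of norm beyond some `K` does
worse than `q₀`, and discarding such `q` does not change the infimum.
-/

open MeasureTheory
open scoped RealInnerProductSpace ENNReal

section

variable {H : Type*} [NormedAddCommGroup H] [InnerProductSpace ℝ H] [CompleteSpace H]
  [SecondCountableTopology H] [MeasurableSpace H] [BorelSpace H]
variable {Λ : Type*} [NormedAddCommGroup Λ] [InnerProductSpace ℝ Λ] [CompleteSpace Λ]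
  [SecondCountableTopology Λ]

/-- The Hamiltonian `𝓗(x,μ,p) = inf_{q ∈ Λ̃} (⟨f(x,μ,q), p⟩ + l(x,μ,q))`. -/
noncomputable def Ham (f : H → Measure H → Λ → H) (l : H → Measure H → Λ → ℝ)
    (Λt : Set Λ) (x : H) (μ : Measure H) (p : H) : ℝ :=
  sInf ((fun q => ⟪f x μ q, p⟫ + l x μ q) '' Λt)

/-- The truncated Hamiltonian `𝓗ᵐ`, with the infimum restricted to `q ∈ Λ̃`, `|q|_Λ ≤ m`. -/
noncomputable def HamM (f : H → Measure H → Λ → H) (l : H → Measure H → Λ → ℝ)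
    (Λt : Set Λ) (m : ℝ) (x : H) (μ : Measure H) (p : H) : ℝ :=
  sInf ((fun q => ⟪f x μ q, p⟫ + l x μ q) '' (Λt ∩ {q : Λ | ‖q‖ ≤ m}))

open Filter in
lemma eventually_mul_add_le_mul_sq {a b c : ℝ} (hc : 0 < c) :
    ∀ᶠ t in atTop, a * t + b ≤ c * t ^ 2 := by
  filter_upwards [eventually_ge_atTop 1, eventually_ge_atTop ((|a| + |b|) / c)] with t ht₁ ht
  have hct : |a| + |b| ≤ c * t := by rwa [div_le_iff₀' hc] at ht
  nlinarith [le_abs_self a, le_abs_self b, abs_nonneg a, abs_nonneg b]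

lemma abs_real_inner_le_of_norm_le {E : Type*} [NormedAddCommGroup E] [InnerProductSpace ℝ E]
    {u v : E} {a b : ℝ} (hu : ‖u‖ ≤ a) (hv : ‖v‖ ≤ b) : |⟪u, v⟫| ≤ a * b :=
  (abs_real_inner_le_norm u v).trans
    (mul_le_mul hu hv (norm_nonneg v) ((norm_nonneg u).trans hu))

lemma sInf_image_eq_sInf_image_inter_of_le {α β : Type*} [ConditionallyCompleteLinearOrder β]
    (g : α → β) {S T : Set α} {q₀ : α} (hq₀ : q₀ ∈ S ∩ T) (h : ∀ q ∈ S, q ∉ T → g q₀ ≤ g q) :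
    sInf (g '' S) = sInf (g '' (S ∩ T)) := by
  refine csInf_eq_csInf_of_forall_exists_le ?_ ?_
  · rintro _ ⟨q, hq, rfl⟩
    by_cases hqT : q ∈ T
    · exact ⟨g q, ⟨q, ⟨hq, hqT⟩, rfl⟩, le_rfl⟩
    · exact ⟨g q₀, ⟨q₀, hq₀, rfl⟩, h q hq hqT⟩
  · rintro _ ⟨q, hq, rfl⟩
    exact ⟨g q, ⟨q, hq.1, rfl⟩, le_rfl⟩

theorem statement1_general
    (f₁ : H → Measure H → H) (f₂ : H → Measure H → Λ → H)
    (l₁ : H → Measure H → ℝ) (l₂ : H → Measure H → Λ → ℝ)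
    (Λt : Set Λ) (hΛne : Λt.Nonempty)
    (C : ℝ)
    (hf₂ : ∀ (x : H) (μ : Measure H) (q : Λ), IsP2 μ → q ∈ Λt →
      ‖f₂ x μ q‖ ≤ C * (1 + ‖q‖))
    (C₁ C₂ C₃ : ℝ) (hC₂ : 0 < C₂)
    (hl₂ : ∀ (x : H) (μ : Measure H) (q : Λ), IsP2 μ → q ∈ Λt →
      -C₁ + C₂ * ‖q‖ ^ 2 ≤ l₂ x μ q ∧ l₂ x μ q ≤ C₁ + C₃ * ‖q‖ ^ 2) :
    ∀ C' : ℝ, 0 < C' → ∃ K : ℝ, 0 < K ∧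
      ∀ (μ : Measure H) (x p : H), IsP2 μ → ‖p‖ ≤ C' →
        Ham (fun a ν q => f₁ a ν + f₂ a ν q) (fun a ν q => l₁ a ν + l₂ a ν q) Λt x μ p
          = HamM (fun a ν q => f₁ a ν + f₂ a ν q) (fun a ν q => l₁ a ν + l₂ a ν q)
              Λt K x μ p := by
  intro C' _
  obtain ⟨q₀, hq₀⟩ := hΛne
  -- `b` gathers the bound on the integrand at `q₀` and the `q`-free part of its lower bound at `q`
  obtain ⟨N, hN⟩ := Filter.eventually_atTop.1 <| eventually_mul_add_le_mul_sq
    (a := C * C') (b := C * C' * (2 + ‖q₀‖) + 2 * C₁ + C₃ * ‖q₀‖ ^ 2) hC₂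
  refine ⟨max N (‖q₀‖ + 1), by positivity, fun μ x p hμ hp => ?_⟩
  refine sInf_image_eq_sInf_image_inter_of_le _
    ⟨hq₀, show ‖q₀‖ ≤ _ from le_max_of_le_right (by linarith)⟩ fun q hq hqK => ?_
  have hqN : N ≤ ‖q‖ := le_of_lt (lt_of_le_of_lt (le_max_left _ _) (not_le.1 hqK))
  have hf₂q₀ := abs_le.1 (abs_real_inner_le_of_norm_le (hf₂ x μ q₀ hμ hq₀) hp)
  have hf₂q := abs_le.1 (abs_real_inner_le_of_norm_le (hf₂ x μ q hμ hq) hp)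
  have hl₂q₀ := (hl₂ x μ q₀ hμ hq₀).2
  have hl₂q := (hl₂ x μ q hμ hq).1
  simp only [inner_add_left]
  linarith [hN ‖q‖ hqN]

/-- Under the growth assumptions on `f₂` and `l₂`, for every `C > 0`
there is `K > 0` such that `𝓗(x,μ,p) = 𝓗ᴷ(x,μ,p)` for all `μ ∈ 𝒫₂(H)` and all
`x, p ∈ H` with `|p| ≤ C`. -/
theorem statement1
    (f₁ : H → Measure H → H) (f₂ : H → Measure H → Λ → H)
    (l₁ : H → Measure H → ℝ) (l₂ : H → Measure H → Λ → ℝ)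
    (Λt : Set Λ) (hΛne : Λt.Nonempty) (hΛconv : Convex ℝ Λt)
    (C : ℝ) (hC : 0 ≤ C)
    (hf₂ : ∀ (x : H) (μ : Measure H) (q : Λ), IsP2 μ → q ∈ Λt →
      ‖f₂ x μ q‖ ≤ C * (1 + ‖q‖))
    (C₁ C₂ C₃ : ℝ) (hC₁ : 0 ≤ C₁) (hC₂ : 0 < C₂) (hC₃ : 0 < C₃)
    (hl₂ : ∀ (x : H) (μ : Measure H) (q : Λ), IsP2 μ → q ∈ Λt →
      -C₁ + C₂ * ‖q‖ ^ 2 ≤ l₂ x μ q ∧ l₂ x μ q ≤ C₁ + C₃ * ‖q‖ ^ 2) :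
    ∀ C' : ℝ, 0 < C' → ∃ K : ℝ, 0 < K ∧
      ∀ (μ : Measure H) (x p : H), IsP2 μ → ‖p‖ ≤ C' →
        Ham (fun a ν q => f₁ a ν + f₂ a ν q) (fun a ν q => l₁ a ν + l₂ a ν q) Λt x μ p
          = HamM (fun a ν q => f₁ a ν + f₂ a ν q) (fun a ν q => l₁ a ν + l₂ a ν q)
              Λt K x μ p :=
  statement1_general f₁ f₂ l₁ l₂ Λt hΛne C hf₂ C₁ C₂ C₃ hC₂ hl₂

end
end

section
/- Under Assumptions (Af) and (Al), there is a constant C' ≥ 0 such that |𝓗(x,μ,p) − 𝓗(x,μ,p')| ≤ C'(1 + |x| + 𝓜_r(μ)^{1/r} + |p| + |p'|)·|p − p'| for all x ∈ H, μ ∈ 𝒫₂(H), and p, p' ∈ H. -/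
/-!
For fixed `(x, μ)` the Hamiltonian is an infimum of functions of `p` that are affine with slopes
`f(x, μ, q)`. The quadratic growth of `l₂` beats the linear growth of `f₂`, so every
`1`-near-minimiser `q` for `p` has `|q| ≤ K (1 + |p|)` with `K` independent of `(x, μ)`; its
slope is then `O(|f₁(x, μ)| + 1 + |p|)`. Comparing both infima at a common near-minimiser gives
the local Lipschitz bound, and `|f₁(x, μ)| ≤ |f₁(0, δ₀)| + C (|x| + 𝓜_r(μ)^{1/r})` because the
coupling of `μ` with `δ₀` shows `d_r(μ, δ₀) ≤ 𝓜_r(μ)^{1/r}`.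
-/

open MeasureTheory
open scoped RealInnerProductSpace ENNReal

section

variable {H : Type*} [NormedAddCommGroup H] [InnerProductSpace ℝ H] [CompleteSpace H]
  [SecondCountableTopology H] [MeasurableSpace H] [BorelSpace H]
variable {Λ : Type*} [NormedAddCommGroup Λ] [InnerProductSpace ℝ Λ] [CompleteSpace Λ]
  [SecondCountableTopology Λ] [MeasurableSpace Λ] [BorelSpace Λ]

/-- The `r`-Wasserstein distance `d_r` on probability measures on `H`. -/
noncomputable def dr (r : ℝ) (μ β : Measure H) : ℝ :=
  sInf { c : ℝ | ∃ γ : Measure (H × H), IsProbabilityMeasure γ ∧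
      γ.map Prod.fst = μ ∧ γ.map Prod.snd = β ∧
      c = (∫ p, ‖p.1 - p.2‖ ^ r ∂γ) ^ (1 / r) }

/-- The weak norm `|x|_{-1} = ⟨Bx, x⟩^{1/2}`. -/
noncomputable def nrmB (B : H →L[ℝ] H) (x : H) : ℝ := Real.sqrt ⟪B x, x⟫

/-- The `r`-Wasserstein distance `d_{-1,r}` with respect to the weak norm `|·|_{-1}`. -/
noncomputable def drB (B : H →L[ℝ] H) (r : ℝ) (μ β : Measure H) : ℝ :=
  sInf { c : ℝ | ∃ γ : Measure (H × H), IsProbabilityMeasure γ ∧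
      γ.map Prod.fst = μ ∧ γ.map Prod.snd = β ∧
      c = (∫ p, nrmB B (p.1 - p.2) ^ r ∂γ) ^ (1 / r) }

theorem isP2_dirac_zero {X : Type*} [NormedAddCommGroup X] [MeasurableSpace X]
    [OpensMeasurableSpace X] : IsP2 (Measure.dirac (0 : X)) :=
  ⟨inferInstance, by
    rw [lintegral_dirac' _ (measurable_nnnorm.coe_nnreal_ennreal.pow_const 2)]
    simp⟩

theorem dr_dirac_zero_le {X : Type*} [NormedAddCommGroup X] [MeasurableSpace X]
    [OpensMeasurableSpace X] [SecondCountableTopology X] (r : ℝ) (μ : Measure X)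
    [IsProbabilityMeasure μ] :
    dr r μ (Measure.dirac 0) ≤ (∫ y, ‖y‖ ^ r ∂μ) ^ (1 / r) := by
  have hφ : Measurable (fun y : X => (y, (0 : X))) := measurable_id.prodMk measurable_const
  refine csInf_le ⟨0, ?_⟩ ⟨μ.map fun y => (y, 0), Measure.isProbabilityMeasure_map hφ.aemeasurable,
    ?_, ?_, ?_⟩
  · rintro c ⟨γ, -, -, -, rfl⟩
    exact Real.rpow_nonneg (integral_nonneg fun z => Real.rpow_nonneg (norm_nonneg _) r) _
  · rw [Measure.map_map measurable_fst hφ]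
    exact Measure.map_id
  · rw [Measure.map_map measurable_snd hφ]
    simp [Function.comp_def, Measure.map_const]
  · have hg : Measurable fun p : X × X => ‖p.1 - p.2‖ ^ r :=
      (continuous_fst.sub continuous_snd).norm.measurable.pow_const r
    rw [integral_map hφ.aemeasurable hg.aestronglyMeasurable]
    simp

theorem le_one_add_div_of_mul_sq_le {c t a b : ℝ} (hc : 0 < c) (ha : 0 ≤ a) (hb : 0 ≤ b)
    (h : c * t ^ 2 ≤ a * t + b) : t ≤ 1 + (a + b) / c := by
  rcases le_or_gt t 1 with ht | ht
  · have : 0 ≤ (a + b) / c := by positivity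
    linarith
  · have hct : c * t ≤ a + b := by nlinarith
    have : t ≤ (a + b) / c := by rw [le_div_iff₀ hc]; linarith
    linarith

section AffineInfimum

variable {Q E : Type*} [NormedAddCommGroup E] [InnerProductSpace ℝ E]

theorem bddBelow_image_inner_add [Norm Q] {S : Set Q} {g : Q → E} {h : Q → ℝ} {a b c C : ℝ}
    (hC : 0 < C) (hg : ∀ q ∈ S, ‖g q‖ ≤ a + b * ‖q‖) (hh : ∀ q ∈ S, c + C * ‖q‖ ^ 2 ≤ h q)
    (w : E) : BddBelow ((fun q => ⟪g q, w⟫ + h q) '' S) := by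
  refine ⟨c - a * ‖w‖ - (b * ‖w‖) ^ 2 / (4 * C), ?_⟩
  rintro _ ⟨q, hq, rfl⟩
  have hinner : -((a + b * ‖q‖) * ‖w‖) ≤ ⟪g q, w⟫ :=
    (neg_le_neg (mul_le_mul_of_nonneg_right (hg q hq) (norm_nonneg w))).trans
      (neg_le_of_abs_le (abs_real_inner_le_norm _ _))
  have hsq : 0 ≤ (2 * C * ‖q‖ - b * ‖w‖) ^ 2 / (4 * C) := by positivity
  have hexp : (2 * C * ‖q‖ - b * ‖w‖) ^ 2 / (4 * C)
      = C * ‖q‖ ^ 2 - b * ‖w‖ * ‖q‖ + (b * ‖w‖) ^ 2 / (4 * C) := by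
    field_simp; ring
  nlinarith [hh q hq]

theorem sInf_image_inner_add_sub_le {S : Set Q} {g : Q → E} {h : Q → ℝ} {q₀ : Q} (hq₀ : q₀ ∈ S)
    {u v : E} {K : ℝ} (hu : BddBelow ((fun q => ⟪g q, u⟫ + h q) '' S))
    (hv : BddBelow ((fun q => ⟪g q, v⟫ + h q) '' S))
    (hK : ∀ q ∈ S, ⟪g q, v⟫ + h q ≤ ⟪g q₀, v⟫ + h q₀ + 1 → ‖g q‖ ≤ K) :
    sInf ((fun q => ⟪g q, u⟫ + h q) '' S) - sInf ((fun q => ⟪g q, v⟫ + h q) '' S)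
      ≤ K * ‖u - v‖ := by
  refine le_of_forall_pos_le_add fun ε hε => ?_
  obtain ⟨_, ⟨q, hq, rfl⟩, hlt⟩ := Real.lt_sInf_add_pos
    ((Set.nonempty_of_mem hq₀).image fun q => ⟪g q, v⟫ + h q) (lt_min hε one_pos)
  have hv₀ := csInf_le hv ⟨q₀, hq₀, rfl⟩
  have hu_le := csInf_le hu ⟨q, hq, rfl⟩
  dsimp only at hlt hv₀ hu_le
  have hq_near : ⟪g q, v⟫ + h q ≤ ⟪g q₀, v⟫ + h q₀ + 1 := by
    linarith [min_le_right ε 1]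
  have hinner : ⟪g q, u⟫ - ⟪g q, v⟫ ≤ K * ‖u - v‖ := by
    rw [← inner_sub_right]
    exact (real_inner_le_norm _ _).trans
      (mul_le_mul_of_nonneg_right (hK q hq hq_near) (norm_nonneg _))
  linarith [min_le_left ε 1]

theorem abs_sInf_image_inner_add_sub_le {S : Set Q} {g : Q → E} {h : Q → ℝ} {q₀ : Q}
    (hq₀ : q₀ ∈ S) {u v : E} {K : ℝ} (hu : BddBelow ((fun q => ⟪g q, u⟫ + h q) '' S))
    (hv : BddBelow ((fun q => ⟪g q, v⟫ + h q) '' S))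
    (hKu : ∀ q ∈ S, ⟪g q, u⟫ + h q ≤ ⟪g q₀, u⟫ + h q₀ + 1 → ‖g q‖ ≤ K)
    (hKv : ∀ q ∈ S, ⟪g q, v⟫ + h q ≤ ⟪g q₀, v⟫ + h q₀ + 1 → ‖g q‖ ≤ K) :
    |sInf ((fun q => ⟪g q, u⟫ + h q) '' S) - sInf ((fun q => ⟪g q, v⟫ + h q) '' S)|
      ≤ K * ‖u - v‖ := by
  rw [abs_sub_le_iff]
  exact ⟨sInf_image_inner_add_sub_le hq₀ hu hv hKv,
    norm_sub_rev u v ▸ sInf_image_inner_add_sub_le hq₀ hv hu hKu⟩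

theorem exists_norm_le_of_mem_sublevel [SeminormedAddCommGroup Q] {Cf C₁ C₂ C₃ : ℝ} (hCf : 0 ≤ Cf)
    (hC₁ : 0 ≤ C₁) (hC₂ : 0 < C₂) (hC₃ : 0 ≤ C₃) (q₀ : Q) :
    ∃ K, 0 ≤ K ∧ ∀ (S : Set Q) (g : Q → E) (h : Q → ℝ),
      (∀ q ∈ S, ‖g q‖ ≤ Cf * (1 + ‖q‖)) →
      (∀ q ∈ S, -C₁ + C₂ * ‖q‖ ^ 2 ≤ h q ∧ h q ≤ C₁ + C₃ * ‖q‖ ^ 2) → q₀ ∈ S →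
      ∀ (w : E), ∀ q ∈ S, ⟪g q, w⟫ + h q ≤ ⟪g q₀, w⟫ + h q₀ + 1 → ‖q‖ ≤ K * (1 + ‖w‖) := by
  set N := 2 * C₁ + C₃ * ‖q₀‖ ^ 2 + 1 + Cf * (3 + ‖q₀‖)
  have hN : 0 ≤ N := by positivity
  refine ⟨1 + N / C₂, by positivity, fun S g h hg hh hq₀ w q hq hle => ?_⟩
  have hw := norm_nonneg w
  have hlow : -(Cf * (1 + ‖q‖) * ‖w‖) ≤ ⟪g q, w⟫ :=
    (neg_le_neg (mul_le_mul_of_nonneg_right (hg q hq) hw)).trans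
      (neg_le_of_abs_le (abs_real_inner_le_norm _ _))
  have hup : ⟪g q₀, w⟫ ≤ Cf * (1 + ‖q₀‖) * ‖w‖ :=
    (real_inner_le_norm _ _).trans (mul_le_mul_of_nonneg_right (hg q₀ hq₀) hw)
  have hquad : C₂ * ‖q‖ ^ 2
      ≤ Cf * ‖w‖ * ‖q‖ + (2 * C₁ + C₃ * ‖q₀‖ ^ 2 + 1 + Cf * (2 + ‖q₀‖) * ‖w‖) := by
    linarith [(hh q hq).1, (hh q₀ hq₀).2]
  have hbound := le_one_add_div_of_mul_sq_le hC₂ (by positivity) (by positivity) hquad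
  have hnum : Cf * ‖w‖ + (2 * C₁ + C₃ * ‖q₀‖ ^ 2 + 1 + Cf * (2 + ‖q₀‖) * ‖w‖)
      ≤ N * (1 + ‖w‖) := by
    nlinarith [mul_nonneg hC₁ hw, mul_nonneg (mul_nonneg hC₃ (sq_nonneg ‖q₀‖)) hw,
      mul_nonneg hCf (by positivity : (0 : ℝ) ≤ 3 + ‖q₀‖)]
  calc ‖q‖ ≤ 1 + N * (1 + ‖w‖) / C₂ := hbound.trans (by gcongr)
    _ = 1 + N / C₂ * (1 + ‖w‖) := by ring
    _ ≤ (1 + N / C₂) * (1 + ‖w‖) := by rw [add_mul, one_mul]; linarith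

theorem exists_abs_sInf_image_sub_le [SeminormedAddCommGroup Q] {Cf C₁ C₂ C₃ : ℝ} (hCf : 0 ≤ Cf)
    (hC₁ : 0 ≤ C₁) (hC₂ : 0 < C₂) (hC₃ : 0 ≤ C₃) (q₀ : Q) :
    ∃ K, 0 ≤ K ∧ ∀ (S : Set Q) (g₀ : E) (h₀ : ℝ) (g : Q → E) (h : Q → ℝ), q₀ ∈ S →
      (∀ q ∈ S, ‖g q‖ ≤ Cf * (1 + ‖q‖)) →
      (∀ q ∈ S, -C₁ + C₂ * ‖q‖ ^ 2 ≤ h q ∧ h q ≤ C₁ + C₃ * ‖q‖ ^ 2) → ∀ u v : E,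
      |sInf ((fun q => ⟪g₀ + g q, u⟫ + (h₀ + h q)) '' S) -
          sInf ((fun q => ⟪g₀ + g q, v⟫ + (h₀ + h q)) '' S)|
        ≤ (‖g₀‖ + K * (1 + ‖u‖ + ‖v‖)) * ‖u - v‖ := by
  obtain ⟨K₀, hK₀, hsublevel⟩ := exists_norm_le_of_mem_sublevel (E := E) hCf hC₁ hC₂ hC₃ q₀
  refine ⟨Cf * (1 + K₀), by positivity, fun S g₀ h₀ g h hq₀ hg hh u v => ?_⟩
  have hgrowth : ∀ q ∈ S, ‖g₀ + g q‖ ≤ ‖g₀‖ + Cf + Cf * ‖q‖ := fun q hq => by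
    linarith [norm_add_le g₀ (g q), hg q hq]
  have hbdd : ∀ w : E, BddBelow ((fun q => ⟪g₀ + g q, w⟫ + (h₀ + h q)) '' S) :=
    bddBelow_image_inner_add (c := h₀ - C₁) hC₂ hgrowth fun q hq => by linarith [(hh q hq).1]
  have hslope (w : E) (hw : ‖w‖ ≤ ‖u‖ + ‖v‖) (q : Q) (hq : q ∈ S)
      (hle : ⟪g₀ + g q, w⟫ + (h₀ + h q) ≤ ⟪g₀ + g q₀, w⟫ + (h₀ + h q₀) + 1) :
      ‖g₀ + g q‖ ≤ ‖g₀‖ + Cf * (1 + K₀) * (1 + ‖u‖ + ‖v‖) := by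
    simp only [inner_add_left] at hle
    have hq_le : ‖q‖ ≤ K₀ * (1 + ‖u‖ + ‖v‖) :=
      (hsublevel S g h hg hh hq₀ w q hq (by linarith)).trans
        (mul_le_mul_of_nonneg_left (by linarith) hK₀)
    have h1 : 1 ≤ 1 + ‖u‖ + ‖v‖ := by linarith [norm_nonneg u, norm_nonneg v]
    nlinarith [hgrowth q hq, mul_le_mul_of_nonneg_left hq_le hCf, mul_le_mul_of_nonneg_left h1 hCf]
  exact abs_sInf_image_inner_add_sub_le hq₀ (hbdd u) (hbdd v)
    (hslope u (by linarith [norm_nonneg v])) (hslope v (by linarith [norm_nonneg u]))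

end AffineInfimum

theorem statement2_general
    (r : ℝ)
    (f₁ : H → Measure H → H) (f₂ : H → Measure H → Λ → H)
    (l₁ : H → Measure H → ℝ) (l₂ : H → Measure H → Λ → ℝ)
    (Λt : Set Λ) (hΛne : Λt.Nonempty)
    -- Assumption (Af)
    (Cf : ℝ) (hCf : 0 ≤ Cf)
    (hf_lip : ∀ (x y : H) (μ β : Measure H) (q : Λ), IsP2 μ → IsP2 β → q ∈ Λt →
      ‖f₁ x μ - f₁ y β‖ + ‖f₂ x μ q - f₂ y β q‖ ≤ Cf * (‖x - y‖ + dr r μ β))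
    (hf₂bd : ∀ (x : H) (μ : Measure H) (q : Λ), IsP2 μ → q ∈ Λt →
      ‖f₂ x μ q‖ ≤ Cf * (1 + ‖q‖))
    -- Assumption (Al)
    (C₁ C₂ C₃ : ℝ) (hC₁ : 0 ≤ C₁) (hC₂ : 0 < C₂) (hC₃ : 0 < C₃)
    (hl₂bd : ∀ (x : H) (μ : Measure H) (q : Λ), IsP2 μ → q ∈ Λt →
      -C₁ + C₂ * ‖q‖ ^ 2 ≤ l₂ x μ q ∧ l₂ x μ q ≤ C₁ + C₃ * ‖q‖ ^ 2)
    :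
    ∃ C' : ℝ, 0 ≤ C' ∧ ∀ (x : H) (μ : Measure H) (p p' : H), IsP2 μ →
      |Ham (fun a ν q => f₁ a ν + f₂ a ν q) (fun a ν q => l₁ a ν + l₂ a ν q) Λt x μ p -
          Ham (fun a ν q => f₁ a ν + f₂ a ν q) (fun a ν q => l₁ a ν + l₂ a ν q) Λt x μ p'|
        ≤ C' * (1 + ‖x‖ + (∫ y, ‖y‖ ^ r ∂μ) ^ (1 / r) + ‖p‖ + ‖p'‖) * ‖p - p'‖ := by
  obtain ⟨q₀, hq₀⟩ := hΛne
  obtain ⟨K, hK, hHam⟩ := exists_abs_sInf_image_sub_le (E := H) hCf hC₁ hC₂ hC₃.le q₀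
  set A := ‖f₁ 0 (Measure.dirac 0)‖
  refine ⟨A + Cf + K, by positivity, fun x μ p p' hμ => ?_⟩
  have : IsProbabilityMeasure μ := hμ.1
  set M := (∫ y, ‖y‖ ^ r ∂μ) ^ (1 / r)
  have hM : 0 ≤ M := Real.rpow_nonneg (integral_nonneg fun y => by positivity) _
  have hf₁ : ‖f₁ x μ‖ ≤ A + Cf * (‖x‖ + M) := by
    have h := hf_lip x 0 μ _ q₀ hμ isP2_dirac_zero hq₀
    rw [sub_zero] at h
    have := norm_sub_norm_le (f₁ x μ) (f₁ 0 (Measure.dirac 0))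
    have := mul_le_mul_of_nonneg_left (add_le_add_left (dr_dirac_zero_le r μ) ‖x‖) hCf
    linarith [norm_nonneg (f₂ x μ q₀ - f₂ 0 (Measure.dirac 0) q₀)]
  have hS : 1 ≤ 1 + ‖x‖ + M + ‖p‖ + ‖p'‖ := by
    linarith [norm_nonneg x, norm_nonneg p, norm_nonneg p']
  calc _ ≤ (‖f₁ x μ‖ + K * (1 + ‖p‖ + ‖p'‖)) * ‖p - p'‖ :=
        hHam Λt (f₁ x μ) (l₁ x μ) (f₂ x μ) (l₂ x μ) hq₀ (fun q hq => hf₂bd x μ q hμ hq)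
          (fun q hq => hl₂bd x μ q hμ hq) p p'
    _ ≤ (A + Cf + K) * (1 + ‖x‖ + M + ‖p‖ + ‖p'‖) * ‖p - p'‖ := by
        gcongr
        nlinarith [mul_le_mul_of_nonneg_left hS (norm_nonneg (f₁ 0 (Measure.dirac 0))),
          mul_le_mul_of_nonneg_left hS hCf, norm_nonneg x, mul_nonneg hK (norm_nonneg x),
          mul_nonneg hK hM, mul_nonneg hCf (norm_nonneg p), mul_nonneg hCf (norm_nonneg p')]

/-- Under Assumptions (Af) and (Al), the Hamiltonian is locally Lipschitz
in `p`: `|𝓗(x,μ,p) − 𝓗(x,μ,p')| ≤ C'(1 + |x| + 𝓜_r(μ)^{1/r} + |p| + |p'|)·|p − p'|`. -/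
theorem statement2
    (r : ℝ) (hr1 : 1 ≤ r) (hr2 : r < 2)
    (B : H →L[ℝ] H)
    (hBsa : ∀ x y : H, ⟪B x, y⟫ = ⟪x, B y⟫)
    (hBpos : ∀ x : H, x ≠ 0 → 0 < ⟪B x, x⟫)
    (f₁ : H → Measure H → H) (f₂ : H → Measure H → Λ → H)
    (l₁ : H → Measure H → ℝ) (l₂ : H → Measure H → Λ → ℝ)
    (Λt : Set Λ) (hΛne : Λt.Nonempty) (hΛconv : Convex ℝ Λt)
    -- Assumption (Af)
    (Cf : ℝ) (hCf : 0 ≤ Cf)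
    (hf_lip : ∀ (x y : H) (μ β : Measure H) (q : Λ), IsP2 μ → IsP2 β → q ∈ Λt →
      ‖f₁ x μ - f₁ y β‖ + ‖f₂ x μ q - f₂ y β q‖ ≤ Cf * (‖x - y‖ + dr r μ β))
    (hf₂bd : ∀ (x : H) (μ : Measure H) (q : Λ), IsP2 μ → q ∈ Λt →
      ‖f₂ x μ q‖ ≤ Cf * (1 + ‖q‖))
    -- Assumption (Al)
    (Cl : ℝ) (hCl : 0 ≤ Cl)
    (hl_lip : ∀ (x y : H) (μ β : Measure H) (q : Λ), IsP2 μ → IsP2 β → q ∈ Λt →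
      |l₁ x μ - l₁ y β| + |l₂ x μ q - l₂ y β q| ≤ Cl * (nrmB B (x - y) + drB B r μ β))
    (C₁ C₂ C₃ : ℝ) (hC₁ : 0 ≤ C₁) (hC₂ : 0 < C₂) (hC₃ : 0 < C₃)
    (hl₂bd : ∀ (x : H) (μ : Measure H) (q : Λ), IsP2 μ → q ∈ Λt →
      -C₁ + C₂ * ‖q‖ ^ 2 ≤ l₂ x μ q ∧ l₂ x μ q ≤ C₁ + C₃ * ‖q‖ ^ 2)
    :
    ∃ C' : ℝ, 0 ≤ C' ∧ ∀ (x : H) (μ : Measure H) (p p' : H), IsP2 μ →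
      |Ham (fun a ν q => f₁ a ν + f₂ a ν q) (fun a ν q => l₁ a ν + l₂ a ν q) Λt x μ p -
          Ham (fun a ν q => f₁ a ν + f₂ a ν q) (fun a ν q => l₁ a ν + l₂ a ν q) Λt x μ p'|
        ≤ C' * (1 + ‖x‖ + (∫ y, ‖y‖ ^ r ∂μ) ^ (1 / r) + ‖p‖ + ‖p'‖) * ‖p - p'‖ :=
  statement2_general r f₁ f₂ l₁ l₂ Λt hΛne Cf hCf hf_lip hf₂bd C₁ C₂ C₃ hC₁ hC₂ hC₃ hl₂bd

end
end

section
/- Under Assumptions (Af) and (Al), there is a constant C' ≥ 0 such that |𝓗(x,μ,p) − 𝓗(y,β,p)| ≤ C'(|x−y| + d_r(μ,β))·(1 + |p|) for all x, y ∈ H, μ, β ∈ 𝒫₂(H), and p ∈ H. -/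
/-!
For a fixed control `q`, the quantity `⟪f(x, μ, q), p⟫ + l(x, μ, q)` is Lipschitz in `(x, μ)`
with constant `(C_f + C_l √‖B‖)(1 + |p|)`, uniformly in `q`: the weak norm satisfies
`|z|_{-1} ≤ √‖B‖ |z|`, hence `d_{-1,r} ≤ √‖B‖ d_r` coupling by coupling. The coercivity
`C₂|q|²` of `l₂` dominates the linear growth of `f₂`, so each family is bounded below in `q`,
and infima of two bounded-below families that are uniformly `M`-close are `M`-close.
-/

open MeasureTheory
open scoped RealInnerProductSpace ENNReal

section

variable {H : Type*} [NormedAddCommGroup H] [InnerProductSpace ℝ H] [CompleteSpace H]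
  [SecondCountableTopology H] [MeasurableSpace H] [BorelSpace H]
variable {Λ : Type*} [NormedAddCommGroup Λ] [InnerProductSpace ℝ Λ] [CompleteSpace Λ]
  [SecondCountableTopology Λ] [MeasurableSpace Λ] [BorelSpace Λ]

section

variable {E : Type*} [NormedAddCommGroup E] [MeasurableSpace E]

lemma dr_nonneg (r : ℝ) (μ β : Measure E) : 0 ≤ dr r μ β :=
  Real.sInf_nonneg <| by
    rintro c ⟨γ, -, -, -, rfl⟩
    exact Real.rpow_nonneg (integral_nonneg fun p => by positivity) _

variable [BorelSpace E] [SecondCountableTopology E]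

lemma IsP2.memLp_two {μ : Measure E} (hμ : IsP2 μ) : MemLp id 2 μ := by
  refine ⟨aestronglyMeasurable_id, ?_⟩
  rw [eLpNorm_lt_top_iff_lintegral_rpow_enorm_lt_top two_ne_zero ENNReal.ofNat_ne_top]
  simpa [enorm_eq_nnnorm] using hμ.2

lemma integrable_norm_sub_rpow_of_marginals {r : ℝ} (hr0 : 0 ≤ r) (hr2 : r ≤ 2)
    {μ β : Measure E} (hμ : IsP2 μ) (hβ : IsP2 β) {γ : Measure (E × E)} [IsFiniteMeasure γ]
    (h₁ : γ.map Prod.fst = μ) (h₂ : γ.map Prod.snd = β) :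
    Integrable (fun p : E × E => ‖p.1 - p.2‖ ^ r) γ := by
  have hfst : MemLp Prod.fst 2 γ :=
    (h₁ ▸ hμ.memLp_two).comp_of_map measurable_fst.aemeasurable
  have hsnd : MemLp Prod.snd 2 γ :=
    (h₂ ▸ hβ.memLp_two).comp_of_map measurable_snd.aemeasurable
  have hr : ENNReal.ofReal r ≤ 2 := by simpa using ENNReal.ofReal_le_ofReal hr2
  simpa [ENNReal.toReal_ofReal hr0] using
    ((hfst.sub hsnd).mono_exponent hr).integrable_norm_rpow'

end

lemma integral_rpow_rpow_inv_le_mul {α : Type*} [MeasurableSpace α] {γ : Measure α}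
    {r K : ℝ} (hr : 0 < r) (hK : 0 ≤ K) {u v : α → ℝ} (hu : ∀ a, 0 ≤ u a)
    (hv : ∀ a, 0 ≤ v a) (huv : ∀ a, u a ≤ K * v a) (hint : Integrable (fun a => v a ^ r) γ) :
    (∫ a, u a ^ r ∂γ) ^ (1 / r) ≤ K * (∫ a, v a ^ r ∂γ) ^ (1 / r) := by
  have hu_r a : 0 ≤ u a ^ r := Real.rpow_nonneg (hu a) r
  have hv_r a : 0 ≤ v a ^ r := Real.rpow_nonneg (hv a) r
  have hmono : ∫ a, u a ^ r ∂γ ≤ ∫ a, K ^ r * v a ^ r ∂γ := by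
    refine integral_mono_of_nonneg (.of_forall hu_r) (hint.const_mul _) (.of_forall fun a => ?_)
    simp only [← Real.mul_rpow hK (hv a)]
    exact Real.rpow_le_rpow (hu a) (huv a) hr.le
  calc (∫ a, u a ^ r ∂γ) ^ (1 / r) ≤ (K ^ r * ∫ a, v a ^ r ∂γ) ^ (1 / r) := by
        rw [← integral_const_mul]
        exact Real.rpow_le_rpow (integral_nonneg hu_r) hmono (by positivity)
    _ = K * (∫ a, v a ^ r ∂γ) ^ (1 / r) := by
        rw [Real.mul_rpow (by positivity) (integral_nonneg hv_r),
          ← Real.rpow_mul hK, mul_one_div_cancel hr.ne', Real.rpow_one]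

section

variable {E : Type*} [NormedAddCommGroup E] [InnerProductSpace ℝ E]

lemma nrmB_le (B : E →L[ℝ] E) (z : E) : nrmB B z ≤ √‖B‖ * ‖z‖ := by
  have h : ⟪B z, z⟫ ≤ ‖B‖ * ‖z‖ ^ 2 :=
    calc ⟪B z, z⟫ ≤ ‖B z‖ * ‖z‖ := real_inner_le_norm _ _
      _ ≤ ‖B‖ * ‖z‖ * ‖z‖ := by gcongr; exact B.le_opNorm z
      _ = ‖B‖ * ‖z‖ ^ 2 := by ring
  calc nrmB B z ≤ √(‖B‖ * ‖z‖ ^ 2) := Real.sqrt_le_sqrt h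
    _ = √‖B‖ * ‖z‖ := by rw [Real.sqrt_mul (norm_nonneg _), Real.sqrt_sq (norm_nonneg _)]

variable [MeasurableSpace E] [BorelSpace E] [SecondCountableTopology E]

lemma drB_le_mul_dr {r : ℝ} (hr0 : 0 < r) (hr2 : r ≤ 2) (B : E →L[ℝ] E)
    {μ β : Measure E} (hμ : IsP2 μ) (hβ : IsP2 β) :
    drB B r μ β ≤ √‖B‖ * dr r μ β := by
  have := hμ.1
  have := hβ.1
  have hne : { c : ℝ | ∃ γ : Measure (E × E), IsProbabilityMeasure γ ∧
      γ.map Prod.fst = μ ∧ γ.map Prod.snd = β ∧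
      c = (∫ p, ‖p.1 - p.2‖ ^ r ∂γ) ^ (1 / r) }.Nonempty :=
    ⟨_, μ.prod β, inferInstance, by simp, by simp, rfl⟩
  rw [drB, dr, ← smul_eq_mul, ← Real.sInf_smul_of_nonneg (Real.sqrt_nonneg _)]
  refine le_csInf hne.smul_set ?_
  rintro _ ⟨_, ⟨γ, hγ, h₁, h₂, rfl⟩, rfl⟩
  refine le_trans (csInf_le ⟨0, ?_⟩ ⟨γ, hγ, h₁, h₂, rfl⟩) <|
    integral_rpow_rpow_inv_le_mul hr0 (Real.sqrt_nonneg _) (fun _ => Real.sqrt_nonneg _)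
      (fun _ => norm_nonneg _) (fun p => nrmB_le B _)
      (integrable_norm_sub_rpow_of_marginals hr0.le hr2 hμ hβ h₁ h₂)
  rintro c ⟨γ, -, -, -, rfl⟩
  exact Real.rpow_nonneg (integral_nonneg fun p => Real.rpow_nonneg (Real.sqrt_nonneg _) _) _

lemma nrmB_sub_add_drB_le {r : ℝ} (hr0 : 0 < r) (hr2 : r ≤ 2) (B : E →L[ℝ] E) (x y : E)
    {μ β : Measure E} (hμ : IsP2 μ) (hβ : IsP2 β) :
    nrmB B (x - y) + drB B r μ β ≤ √‖B‖ * (‖x - y‖ + dr r μ β) := by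
  rw [mul_add]
  exact add_le_add (nrmB_le B _) (drB_le_mul_dr hr0 hr2 B hμ hβ)

end

lemma abs_csInf_image_sub_le {α : Type*} {s : Set α} (hs : s.Nonempty) {g₁ g₂ : α → ℝ}
    (h₁ : BddBelow (g₁ '' s)) (h₂ : BddBelow (g₂ '' s)) {M : ℝ}
    (hM : ∀ q ∈ s, |g₁ q - g₂ q| ≤ M) :
    |sInf (g₁ '' s) - sInf (g₂ '' s)| ≤ M := by
  have key {u v : α → ℝ} (hu : BddBelow (u '' s)) (huv : ∀ q ∈ s, u q - v q ≤ M) :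
      sInf (u '' s) - M ≤ sInf (v '' s) := by
    refine le_csInf (hs.image v) ?_
    rintro _ ⟨q, hq, rfl⟩
    linarith [csInf_le hu ⟨q, hq, rfl⟩, huv q hq]
  rw [abs_sub_le_iff]
  constructor
  · linarith [key h₁ fun q hq => le_of_abs_le (hM q hq)]
  · linarith [key h₂ fun q hq => le_of_abs_le ((abs_sub_comm _ _).trans_le (hM q hq))]

lemma bddBelow_image_of_quadratic_le {α : Type*} {s : Set α} {g φ : α → ℝ} {a b c : ℝ}
    (hc : 0 < c) (hg : ∀ q ∈ s, a - b * φ q + c * φ q ^ 2 ≤ g q) : BddBelow (g '' s) := by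
  refine ⟨a - b ^ 2 / (4 * c), ?_⟩
  rintro _ ⟨q, hq, rfl⟩
  have hsq : b ^ 2 / (4 * c) - b * φ q + c * φ q ^ 2 = (b - 2 * c * φ q) ^ 2 / (4 * c) := by
    field_simp
    ring
  have : 0 ≤ (b - 2 * c * φ q) ^ 2 / (4 * c) := by positivity
  linarith [hg q hq]

lemma bddBelow_image_inner_add_add {E F : Type*} [NormedAddCommGroup E] [InnerProductSpace ℝ E]
    [NormedAddCommGroup F] {s : Set F} (a p : E) (b : ℝ) {f : F → E} {l : F → ℝ}
    {Cf C₁ C₂ : ℝ} (hf : ∀ q ∈ s, ‖f q‖ ≤ Cf * (1 + ‖q‖))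
    (hl : ∀ q ∈ s, -C₁ + C₂ * ‖q‖ ^ 2 ≤ l q) (hC₂ : 0 < C₂) :
    BddBelow ((fun q => ⟪a + f q, p⟫ + (b + l q)) '' s) := by
  refine bddBelow_image_of_quadratic_le (a := b - C₁ - (‖a‖ + Cf) * ‖p‖) (b := Cf * ‖p‖)
    (φ := fun q => ‖q‖) hC₂ fun q hq => ?_
  have hinner : -((‖a‖ + Cf * (1 + ‖q‖)) * ‖p‖) ≤ ⟪a + f q, p⟫ :=
    calc -((‖a‖ + Cf * (1 + ‖q‖)) * ‖p‖) ≤ -(‖a + f q‖ * ‖p‖) := by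
          gcongr
          exact (norm_add_le _ _).trans (add_le_add le_rfl (hf q hq))
      _ ≤ ⟪a + f q, p⟫ := neg_le_of_abs_le (abs_real_inner_le_norm _ _)
  linarith [hl q hq]

lemma abs_inner_add_sub_inner_add_le {E : Type*} [NormedAddCommGroup E] [InnerProductSpace ℝ E]
    (u v p : E) (s t : ℝ) : |(⟪u, p⟫ + s) - (⟪v, p⟫ + t)| ≤ ‖u - v‖ * ‖p‖ + |s - t| := by
  calc |(⟪u, p⟫ + s) - (⟪v, p⟫ + t)| = |⟪u - v, p⟫ + (s - t)| := by
        rw [inner_sub_left]; ring_nf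
    _ ≤ ‖u - v‖ * ‖p‖ + |s - t| :=
        (abs_add_le _ _).trans (by gcongr; exact abs_real_inner_le_norm _ _)

theorem statement3_general
    (r : ℝ) (hr1 : 1 ≤ r) (hr2 : r < 2)
    (B : H →L[ℝ] H)
    (f₁ : H → Measure H → H) (f₂ : H → Measure H → Λ → H)
    (l₁ : H → Measure H → ℝ) (l₂ : H → Measure H → Λ → ℝ)
    (Λt : Set Λ) (hΛne : Λt.Nonempty)
    -- Assumption (Af)
    (Cf : ℝ) (hCf : 0 ≤ Cf)
    (hf_lip : ∀ (x y : H) (μ β : Measure H) (q : Λ), IsP2 μ → IsP2 β → q ∈ Λt →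
      ‖f₁ x μ - f₁ y β‖ + ‖f₂ x μ q - f₂ y β q‖ ≤ Cf * (‖x - y‖ + dr r μ β))
    (hf₂bd : ∀ (x : H) (μ : Measure H) (q : Λ), IsP2 μ → q ∈ Λt →
      ‖f₂ x μ q‖ ≤ Cf * (1 + ‖q‖))
    -- Assumption (Al)
    (Cl : ℝ) (hCl : 0 ≤ Cl)
    (hl_lip : ∀ (x y : H) (μ β : Measure H) (q : Λ), IsP2 μ → IsP2 β → q ∈ Λt →
      |l₁ x μ - l₁ y β| + |l₂ x μ q - l₂ y β q| ≤ Cl * (nrmB B (x - y) + drB B r μ β))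
    (C₁ C₂ C₃ : ℝ) (hC₂ : 0 < C₂)
    (hl₂bd : ∀ (x : H) (μ : Measure H) (q : Λ), IsP2 μ → q ∈ Λt →
      -C₁ + C₂ * ‖q‖ ^ 2 ≤ l₂ x μ q ∧ l₂ x μ q ≤ C₁ + C₃ * ‖q‖ ^ 2)
    :
    ∃ C' : ℝ, 0 ≤ C' ∧ ∀ (x y : H) (μ β : Measure H) (p : H), IsP2 μ → IsP2 β →
      |Ham (fun a ν q => f₁ a ν + f₂ a ν q) (fun a ν q => l₁ a ν + l₂ a ν q) Λt x μ p -
          Ham (fun a ν q => f₁ a ν + f₂ a ν q) (fun a ν q => l₁ a ν + l₂ a ν q) Λt y β p|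
        ≤ C' * (‖x - y‖ + dr r μ β) * (1 + ‖p‖) := by
  refine ⟨Cf + Cl * √‖B‖, by positivity, fun x y μ β p hμ hβ => ?_⟩
  have hbdd (z : H) (ν : Measure H) (hν : IsP2 ν) := bddBelow_image_inner_add_add
    (f₁ z ν) p (l₁ z ν) (fun q hq => hf₂bd z ν q hν hq) (fun q hq => (hl₂bd z ν q hν hq).1) hC₂
  refine abs_csInf_image_sub_le hΛne (hbdd x μ hμ) (hbdd y β hβ) fun q hq => ?_
  set D := ‖x - y‖ + dr r μ β
  have hD : 0 ≤ D := add_nonneg (norm_nonneg _) (dr_nonneg r μ β)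
  have hf : ‖(f₁ x μ + f₂ x μ q) - (f₁ y β + f₂ y β q)‖ ≤ Cf * D := by
    rw [add_sub_add_comm]
    exact (norm_add_le _ _).trans (hf_lip x y μ β q hμ hβ hq)
  have hl : |(l₁ x μ + l₂ x μ q) - (l₁ y β + l₂ y β q)| ≤ Cl * √‖B‖ * D := by
    rw [add_sub_add_comm, mul_assoc]
    refine (abs_add_le _ _).trans <| (hl_lip x y μ β q hμ hβ hq).trans ?_
    gcongr
    exact nrmB_sub_add_drB_le (by linarith) hr2.le B x y hμ hβ
  calc _ ≤ ‖(f₁ x μ + f₂ x μ q) - (f₁ y β + f₂ y β q)‖ * ‖p‖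
        + |(l₁ x μ + l₂ x μ q) - (l₁ y β + l₂ y β q)| := abs_inner_add_sub_inner_add_le _ _ _ _ _
    _ ≤ Cf * D * ‖p‖ + Cl * √‖B‖ * D := by gcongr
    _ ≤ (Cf + Cl * √‖B‖) * D * (1 + ‖p‖) := by
        have hClD : 0 ≤ Cl * √‖B‖ * D := by positivity
        nlinarith [mul_nonneg hCf hD, mul_nonneg hClD (norm_nonneg p)]

/-- Under Assumptions (Af) and (Al), the Hamiltonian is Lipschitz in
`(x,μ)`: `|𝓗(x,μ,p) − 𝓗(y,β,p)| ≤ C'(|x−y| + d_r(μ,β))·(1 + |p|)`. -/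
theorem statement3
    (r : ℝ) (hr1 : 1 ≤ r) (hr2 : r < 2)
    (B : H →L[ℝ] H)
    (hBsa : ∀ x y : H, ⟪B x, y⟫ = ⟪x, B y⟫)
    (hBpos : ∀ x : H, x ≠ 0 → 0 < ⟪B x, x⟫)
    (f₁ : H → Measure H → H) (f₂ : H → Measure H → Λ → H)
    (l₁ : H → Measure H → ℝ) (l₂ : H → Measure H → Λ → ℝ)
    (Λt : Set Λ) (hΛne : Λt.Nonempty) (hΛconv : Convex ℝ Λt)
    -- Assumption (Af)
    (Cf : ℝ) (hCf : 0 ≤ Cf)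
    (hf_lip : ∀ (x y : H) (μ β : Measure H) (q : Λ), IsP2 μ → IsP2 β → q ∈ Λt →
      ‖f₁ x μ - f₁ y β‖ + ‖f₂ x μ q - f₂ y β q‖ ≤ Cf * (‖x - y‖ + dr r μ β))
    (hf₂bd : ∀ (x : H) (μ : Measure H) (q : Λ), IsP2 μ → q ∈ Λt →
      ‖f₂ x μ q‖ ≤ Cf * (1 + ‖q‖))
    -- Assumption (Al)
    (Cl : ℝ) (hCl : 0 ≤ Cl)
    (hl_lip : ∀ (x y : H) (μ β : Measure H) (q : Λ), IsP2 μ → IsP2 β → q ∈ Λt →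
      |l₁ x μ - l₁ y β| + |l₂ x μ q - l₂ y β q| ≤ Cl * (nrmB B (x - y) + drB B r μ β))
    (C₁ C₂ C₃ : ℝ) (hC₁ : 0 ≤ C₁) (hC₂ : 0 < C₂) (hC₃ : 0 < C₃)
    (hl₂bd : ∀ (x : H) (μ : Measure H) (q : Λ), IsP2 μ → q ∈ Λt →
      -C₁ + C₂ * ‖q‖ ^ 2 ≤ l₂ x μ q ∧ l₂ x μ q ≤ C₁ + C₃ * ‖q‖ ^ 2)
    :
    ∃ C' : ℝ, 0 ≤ C' ∧ ∀ (x y : H) (μ β : Measure H) (p : H), IsP2 μ → IsP2 β →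
      |Ham (fun a ν q => f₁ a ν + f₂ a ν q) (fun a ν q => l₁ a ν + l₂ a ν q) Λt x μ p -
          Ham (fun a ν q => f₁ a ν + f₂ a ν q) (fun a ν q => l₁ a ν + l₂ a ν q) Λt y β p|
        ≤ C' * (‖x - y‖ + dr r μ β) * (1 + ‖p‖) :=
  statement3_general r hr1 hr2 B f₁ f₂ l₁ l₂ Λt hΛne Cf hCf hf_lip hf₂bd Cl hCl hl_lip C₁ C₂ C₃ hC₂
    hl₂bd

end
end

section
/- Let a, b ≥ 0 and let G : Y → ℝ be concave and satisfy −a(1+|p|) − b|p|² ≤ G(p) ≤ a(1+|p|) for all p ∈ Y. Then there exists a constant C ≥ 0, depending only on a and b, such that |G(p) − G(p')| ≤ C(1 + |p| + |p'|)·|p − p'| for all p, p' ∈ Y. -/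
/-!
Fix `p ≠ p'`, put `d = ‖p - p'‖`, `R = 1 + ‖p‖ + ‖p'‖`, and extend the segment from `p` through `p'`
by length `R` beyond `p'`, to the point `q = p' + (R / d) • (p' - p)`, so that `‖q‖ ≤ 2R`.
Concavity along the line places the chord below the graph, which gives
`(R + d) (G p - G p') ≤ d (G p - G q)`, while the growth bounds give `G p - G q ≤ 4 (a + b) R²`.
Hence `G p - G p' ≤ 4 (a + b) R d`, and exchanging `p` and `p'` gives the absolute value.
-/

theorem ConcaveOn.one_add_mul_sub_le_sub_extrapolate {E : Type*} [AddCommGroup E] [Module ℝ E]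
    {G : E → ℝ} (hG : ConcaveOn ℝ Set.univ G) (p p' : E) {s : ℝ} (hs : 0 ≤ s) :
    (1 + s) * (G p - G p') ≤ G p - G (p' + s • (p' - p)) := by
  have hs1 : 0 < 1 + s := by linarith
  have hcomb : (s / (1 + s)) • p + (1 / (1 + s)) • (p' + s • (p' - p)) = p' := by
    match_scalars <;> field_simp; ring
  have hchord := hG.2 (Set.mem_univ p) (Set.mem_univ (p' + s • (p' - p)))
    (by positivity : 0 ≤ s / (1 + s)) (by positivity : 0 ≤ 1 / (1 + s)) (by field_simp; ring)
  rw [hcomb, smul_eq_mul, smul_eq_mul] at hchord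
  have hmul := mul_le_mul_of_nonneg_left hchord hs1.le
  rw [mul_add, ← mul_assoc, ← mul_assoc, mul_div_cancel₀ _ hs1.ne',
    mul_div_cancel₀ _ hs1.ne', one_mul] at hmul
  linarith

section GrowthBounds

variable {a b : ℝ}

theorem sub_le_mul_sq_of_growth_bounds {E : Type*} [SeminormedAddCommGroup E] {G : E → ℝ}
    (ha : 0 ≤ a) (hb : 0 ≤ b)
    (hbd : ∀ p : E, -a * (1 + ‖p‖) - b * ‖p‖ ^ 2 ≤ G p ∧ G p ≤ a * (1 + ‖p‖))
    {p q : E} {R : ℝ} (hR : 1 ≤ R) (hp : 1 + ‖p‖ ≤ R) (hq : ‖q‖ ≤ 2 * R) :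
    G p - G q ≤ 4 * (a + b) * R ^ 2 := by
  have hq2 : ‖q‖ ^ 2 ≤ 4 * R ^ 2 := by nlinarith [norm_nonneg q]
  have hGp : G p ≤ a * R := (hbd p).2.trans (mul_le_mul_of_nonneg_left hp ha)
  have hGq : -a * (3 * R) - b * (4 * R ^ 2) ≤ G q := by
    nlinarith [(hbd q).1, mul_le_mul_of_nonneg_left hq2 hb]
  nlinarith [mul_le_mul_of_nonneg_left hR ha]

variable {E : Type*} [NormedAddCommGroup E] [NormedSpace ℝ E] {G : E → ℝ}

theorem ConcaveOn.sub_le_of_growth_bounds (ha : 0 ≤ a) (hb : 0 ≤ b)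
    (hG : ConcaveOn ℝ Set.univ G)
    (hbd : ∀ p : E, -a * (1 + ‖p‖) - b * ‖p‖ ^ 2 ≤ G p ∧ G p ≤ a * (1 + ‖p‖)) (p p' : E) :
    G p - G p' ≤ 4 * (a + b) * (1 + ‖p‖ + ‖p'‖) * ‖p - p'‖ := by
  rcases eq_or_ne p p' with rfl | hne
  · simp
  set d := ‖p - p'‖
  set R := 1 + ‖p‖ + ‖p'‖
  have hd : 0 < d := norm_pos_iff.2 (sub_ne_zero.2 hne)
  have hR : 1 ≤ R := by linarith [norm_nonneg p, norm_nonneg p']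
  have hstretch : ‖(R / d) • (p' - p)‖ = R := by
    rw [norm_smul, norm_sub_rev, Real.norm_of_nonneg (by positivity), div_mul_cancel₀ _ hd.ne']
  have hq : ‖p' + (R / d) • (p' - p)‖ ≤ 2 * R :=
    (norm_add_le _ _).trans (by linarith [norm_nonneg p])
  have hchord := hG.one_add_mul_sub_le_sub_extrapolate p p' (by positivity : 0 ≤ R / d)
  have hp : 1 + ‖p‖ ≤ R := by linarith [norm_nonneg p']
  have hgrowth := sub_le_mul_sq_of_growth_bounds ha hb hbd hR hp hq
  have hRd : (R + d) * (G p - G p') ≤ 4 * (a + b) * R ^ 2 * d := by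
    have := mul_le_mul_of_nonneg_left (hchord.trans hgrowth) hd.le
    rwa [← mul_assoc, mul_add, mul_one, mul_div_cancel₀ _ hd.ne', add_comm, mul_comm d] at this
  rcases lt_or_ge (G p - G p') 0 with hneg | hnonneg
  · exact hneg.le.trans (by positivity)
  · nlinarith

end GrowthBounds

theorem statement6_general {Y : Type*} [NormedAddCommGroup Y] [InnerProductSpace ℝ Y]
    (a b : ℝ) (ha : 0 ≤ a) (hb : 0 ≤ b) :
    ∃ C : ℝ, 0 ≤ C ∧ ∀ G : Y → ℝ, ConcaveOn ℝ Set.univ G →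
      (∀ p : Y, -a * (1 + ‖p‖) - b * ‖p‖ ^ 2 ≤ G p ∧ G p ≤ a * (1 + ‖p‖)) →
      ∀ p p' : Y, |G p - G p'| ≤ C * (1 + ‖p‖ + ‖p'‖) * ‖p - p'‖ := by
  refine ⟨4 * (a + b), by positivity, fun G hG hbd p p' => abs_sub_le_iff.2 ⟨?_, ?_⟩⟩
  · exact hG.sub_le_of_growth_bounds ha hb hbd p p'
  · simpa only [norm_sub_rev p', add_right_comm] using hG.sub_le_of_growth_bounds ha hb hbd p' p

/-- A concave function `G : Y → ℝ` on a real Hilbert space satisfying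
`-a(1+|p|) - b|p|² ≤ G p ≤ a(1+|p|)` is locally Lipschitz with the quantitative estimate
`|G p - G p'| ≤ C (1 + ‖p‖ + ‖p'‖) ‖p - p'‖`, where `C` depends only on `a` and `b`. -/
theorem statement6 {Y : Type*} [NormedAddCommGroup Y] [InnerProductSpace ℝ Y] [CompleteSpace Y]
    (a b : ℝ) (ha : 0 ≤ a) (hb : 0 ≤ b) :
    ∃ C : ℝ, 0 ≤ C ∧ ∀ G : Y → ℝ, ConcaveOn ℝ Set.univ G →
      (∀ p : Y, -a * (1 + ‖p‖) - b * ‖p‖ ^ 2 ≤ G p ∧ G p ≤ a * (1 + ‖p‖)) →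
      ∀ p p' : Y, |G p - G p'| ≤ C * (1 + ‖p‖ + ‖p'‖) * ‖p - p'‖ :=
  statement6_general a b ha hb
end
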